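/- arXiv:2511.11948 — 3 statements merged into one kernel-verified Lean document; each statement's English description precedes it below -/
import Mathlib

section
/- Let A(u,v), B(u,v) ∈ ℝ[u,v] be nonconstant homogeneous polynomials with 3·deg A = 2·deg B = d, such that A and B have no common root in ℙ¹(ℝ). Then for every X ≥ 1, the set R(X) = {(u,v) ∈ ℝ² : v > 0, max(4|A(u,v)|³, 27|B(u,v)|²) ≤ X} is bounded. -/
open MvPolynomial


lemma eval_smul_of_homog {σ : Type*} [Fintype σ] {φ : MvPolynomial σ ℝ} {n : ℕ}
    (hφ : φ.IsHomogeneous n) (c : ℝ) (x : σ → ℝ) :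
    eval (fun i => c * x i) φ = c ^ n * eval x φ := by
  rw [eval_eq', eval_eq', Finset.mul_sum]
  refine Finset.sum_congr rfl fun d hd => ?_
  have h := hφ (mem_support_iff.mp hd)
  have hsum : ∑ i, d i = n := by
    rw [← h, Finsupp.weight_apply, Finsupp.sum_fintype] <;> simp
  calc coeff d φ * ∏ i, (c * x i) ^ d i
      = coeff d φ * ((∏ i, c ^ d i) * ∏ i, x i ^ d i) := by
        rw [← Finset.prod_mul_distrib]; simp [mul_pow]
    _ = c ^ n * (coeff d φ * ∏ i, x i ^ d i) := by
        rw [Finset.prod_pow_eq_pow_sum, hsum]; ring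

lemma cont_eval2 (P : MvPolynomial (Fin 2) ℝ) :
    Continuous fun p : ℝ × ℝ => eval ![p.1, p.2] P := by
  apply P.continuous_eval.comp
  apply continuous_pi
  intro i
  fin_cases i
  · simpa using continuous_fst
  · simpa using continuous_snd

/-- Let `A, B ∈ ℝ[u,v]` be nonconstant homogeneous polynomials with
`3·deg A = 2·deg B = d` and no common root in `ℙ¹(ℝ)`.  Then for every `X ≥ 1` the region
`R(X) = {(u,v) : v > 0, max(4|A(u,v)|³, 27|B(u,v)|²) ≤ X}` is bounded. -/
theorem stmt5 (A B : MvPolynomial (Fin 2) ℝ) (dA dB d : ℕ)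
    (hA : A.IsHomogeneous dA) (hB : B.IsHomogeneous dB)
    (hdA : 0 < dA) (hdB : 0 < dB)
    (h3 : 3 * dA = d) (h2 : 2 * dB = d)
    (hnocommon : ∀ u v : ℝ, ¬(u = 0 ∧ v = 0) →
      ¬(eval ![u, v] A = 0 ∧ eval ![u, v] B = 0)) :
    ∀ X : ℝ, 1 ≤ X →
      Bornology.IsBounded {p : ℝ × ℝ | 0 < p.2 ∧
        max (4 * |eval ![p.1, p.2] A| ^ 3) (27 * |eval ![p.1, p.2] B| ^ 2) ≤ X} := by
  intro X hX
  set g : ℝ × ℝ → ℝ := fun p =>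
    max (4 * |eval ![p.1, p.2] A| ^ 3) (27 * |eval ![p.1, p.2] B| ^ 2) with hg
  have hgc : Continuous g :=
    (continuous_const.mul ((cont_eval2 A).abs.pow 3)).max
      (continuous_const.mul ((cont_eval2 B).abs.pow 2))
  -- minimum of g on the unit sphere
  have hsne : (Metric.sphere (0 : ℝ × ℝ) 1).Nonempty := by
    refine ⟨(1, 0), ?_⟩
    simp [Prod.norm_def]
  obtain ⟨p₀, hp₀s, hp₀min⟩ :=
    (isCompact_sphere (0 : ℝ × ℝ) 1).exists_isMinOn hsne hgc.continuousOn
  set ε := g p₀ with hε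
  -- ε > 0
  have hp₀ne : ¬(p₀.1 = 0 ∧ p₀.2 = 0) := by
    rintro ⟨h1, h2⟩
    have : p₀ = 0 := Prod.ext h1 h2
    rw [this] at hp₀s
    simpa using hp₀s
  have hεpos : 0 < ε := by
    rcases not_and_or.mp (hnocommon p₀.1 p₀.2 hp₀ne) with h | h
    · exact lt_max_of_lt_left (by positivity)
    · exact lt_max_of_lt_right (by positivity)
  have hd3 : 3 ≤ d := by omega
  -- scaling : for p ≠ 0, g p = ‖p‖^d * g (‖p‖⁻¹ • p)
  have hscale : ∀ p : ℝ × ℝ, p ≠ 0 → ε * ‖p‖ ^ d ≤ g p := by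
    intro p hp
    have hnp : 0 < ‖p‖ := norm_pos_iff.mpr hp
    set q : ℝ × ℝ := (‖p‖⁻¹ * p.1, ‖p‖⁻¹ * p.2) with hq
    have hqs : q ∈ Metric.sphere (0 : ℝ × ℝ) 1 := by
      have : q = ‖p‖⁻¹ • p := rfl
      rw [mem_sphere_zero_iff_norm, this, norm_smul]
      simp [abs_of_pos (inv_pos.mpr hnp), inv_mul_cancel₀ hnp.ne']
    have hvec : ![p.1, p.2] = fun i => ‖p‖ * ![q.1, q.2] i := by
      funext i
      fin_cases i <;> simp [hq, mul_inv_cancel_left₀ hnp.ne']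
    have hAe : eval ![p.1, p.2] A = ‖p‖ ^ dA * eval ![q.1, q.2] A := by
      rw [hvec, eval_smul_of_homog hA]
    have hBe : eval ![p.1, p.2] B = ‖p‖ ^ dB * eval ![q.1, q.2] B := by
      rw [hvec, eval_smul_of_homog hB]
    have hgp : g p = ‖p‖ ^ d * g q := by
      rw [hg]
      simp only [hAe, hBe, abs_mul, abs_pow, abs_of_pos hnp, mul_pow, ← pow_mul]
      rw [mul_comm dA 3, mul_comm dB 2, h3, h2, mul_max_of_nonneg _ _ (by positivity)]
      ring_nf
    rw [hgp]
    have : ε ≤ g q := hp₀min hqs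
    nlinarith [pow_pos hnp d]
  -- conclude boundedness
  rw [Metric.isBounded_iff_subset_closedBall 0]
  refine ⟨max 1 (X / ε), fun p hp => ?_⟩
  obtain ⟨hp2, hpX⟩ := hp
  have hpne : p ≠ 0 := fun h => by simp [h] at hp2
  have hnp : 0 < ‖p‖ := norm_pos_iff.mpr hpne
  have key : ε * ‖p‖ ^ d ≤ X := le_trans (hscale p hpne) hpX
  simp only [Metric.mem_closedBall, dist_zero_right]
  rcases le_or_gt ‖p‖ 1 with h | h
  · exact le_trans h (le_max_left _ _)
  · have h1 : ‖p‖ ≤ ‖p‖ ^ d := le_self_pow₀ h.le (by omega)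
    have : ε * ‖p‖ ≤ X := le_trans (by nlinarith) key
    have : ‖p‖ ≤ X / ε := (le_div_iff₀ hεpos).mpr (by linarith [mul_comm ε ‖p‖])
    exact le_trans this (le_max_right _ _)
end

section
/- Let C(a,b) = a⁴ + 36a²b² + 432b⁴ and let ℓ ∉ {2,3} be prime. If a, b ∈ ℤ satisfy ℓ⁴ | (-3a²-36b²)·C(a,b) and ℓ⁶ | (2a⁵+72a³b²+864ab⁴)·C(a,b) and not both a,b are divisible by ℓ, then ℓ⁴ | C(a,b). -/
/-- Let `C(a,b) = a⁴ + 36a²b² + 432b⁴` and `ℓ ∉ {2,3}` be prime.  If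
`ℓ⁴ ∣ (-3a² - 36b²)·C(a,b)` and `ℓ⁶ ∣ (2a⁵ + 72a³b² + 864ab⁴)·C(a,b)` and `ℓ` does not
divide both `a` and `b`, then `ℓ⁴ ∣ C(a,b)`. -/
theorem stmt13 (ℓ : ℕ) (hp : ℓ.Prime) (h2 : ℓ ≠ 2) (h3 : ℓ ≠ 3) (a b : ℤ)
    (hA : (ℓ : ℤ) ^ 4 ∣ (-3 * a ^ 2 - 36 * b ^ 2) *
      (a ^ 4 + 36 * a ^ 2 * b ^ 2 + 432 * b ^ 4))
    (hB : (ℓ : ℤ) ^ 6 ∣ (2 * a ^ 5 + 72 * a ^ 3 * b ^ 2 + 864 * a * b ^ 4) *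
      (a ^ 4 + 36 * a ^ 2 * b ^ 2 + 432 * b ^ 4))
    (hab : ¬((ℓ : ℤ) ∣ a ∧ (ℓ : ℤ) ∣ b)) :
    (ℓ : ℤ) ^ 4 ∣ a ^ 4 + 36 * a ^ 2 * b ^ 2 + 432 * b ^ 4 := by
  have hpZ : Prime (ℓ : ℤ) := Nat.prime_iff_prime_int.mp hp
  set C : ℤ := a ^ 4 + 36 * a ^ 2 * b ^ 2 + 432 * b ^ 4 with hCdef
  have hl2 : ¬ (ℓ : ℤ) ∣ 2 := by
    intro h
    have h' : ℓ ∣ 2 := by exact_mod_cast h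
    exact h2 ((Nat.prime_dvd_prime_iff_eq hp Nat.prime_two).mp h')
  have hl3 : ¬ (ℓ : ℤ) ∣ 3 := by
    intro h
    have h' : ℓ ∣ 3 := by exact_mod_cast h
    exact h3 ((Nat.prime_dvd_prime_iff_eq hp Nat.prime_three).mp h')
  -- rewrite hA : ℓ⁴ ∣ 3 * ((a²+12b²) * C)  up to sign
  have hA' : (ℓ : ℤ) ^ 4 ∣ (a ^ 2 + 12 * b ^ 2) * C := by
    have hcop : IsCoprime ((ℓ : ℤ) ^ 4) (-3) := by
      exact ((hpZ.coprime_iff_not_dvd.mpr hl3).pow_left (m := 4)).neg_right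
    apply hcop.dvd_of_dvd_mul_left
    have : (-3) * ((a ^ 2 + 12 * b ^ 2) * C) =
        (-3 * a ^ 2 - 36 * b ^ 2) * C := by ring
    rw [this]; exact hA
  have hB' : (ℓ : ℤ) ^ 6 ∣ 2 * a * C ^ 2 := by
    have : 2 * a * C ^ 2 =
        (2 * a ^ 5 + 72 * a ^ 3 * b ^ 2 + 864 * a * b ^ 4) * C := by
      rw [hCdef]; ring
    rw [this]; exact hB
  by_cases hd : (ℓ : ℤ) ∣ a ^ 2 + 12 * b ^ 2
  · exfalso
    have hbcontra : ¬ (ℓ : ℤ) ∣ b := by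
      intro hb
      apply hab
      refine ⟨?_, hb⟩
      have ha2 : (ℓ : ℤ) ∣ a ^ 2 := by
        have : a ^ 2 = (a ^ 2 + 12 * b ^ 2) - 12 * (b * b) := by ring
        rw [this]
        exact dvd_sub hd (Dvd.dvd.mul_left (hb.mul_left b) 12)
      exact hpZ.dvd_of_dvd_pow ha2
    by_cases hc : (ℓ : ℤ) ∣ C
    · -- ℓ ∣ 144 b⁴, contradiction
      have h144 : (ℓ : ℤ) ∣ 144 * b ^ 4 := by
        have : (144 : ℤ) * b ^ 4 = C - (a ^ 2 + 12 * b ^ 2) * (a ^ 2 + 24 * b ^ 2) := by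
          rw [hCdef]; ring
        rw [this]
        exact dvd_sub hc (hd.mul_right _)
      rcases hpZ.dvd_mul.mp h144 with h | h
      · have : (144 : ℤ) = 2 ^ 4 * 3 ^ 2 := by norm_num
        rw [this] at h
        rcases hpZ.dvd_mul.mp h with h' | h'
        · exact hl2 (hpZ.dvd_of_dvd_pow h')
        · exact hl3 (hpZ.dvd_of_dvd_pow h')
      · exact hbcontra (hpZ.dvd_of_dvd_pow h)
    · -- ℓ ∤ C, so ℓ ∣ a from hB'
      have h1 : (ℓ : ℤ) ∣ 2 * a * C ^ 2 :=
        dvd_trans (dvd_pow_self _ (by norm_num : (6:ℕ) ≠ 0)) hB'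
      have ha : (ℓ : ℤ) ∣ a := by
        rcases hpZ.dvd_mul.mp h1 with h | h
        · rcases hpZ.dvd_mul.mp h with h' | h'
          · exact absurd h' hl2
          · exact h'
        · exact absurd (hpZ.dvd_of_dvd_pow h) hc
      have hb : (ℓ : ℤ) ∣ b := by
        have h12 : (ℓ : ℤ) ∣ 12 * b ^ 2 := by
          have : (12 : ℤ) * b ^ 2 = (a ^ 2 + 12 * b ^ 2) - a * a := by ring
          rw [this]
          exact dvd_sub hd (ha.mul_left a)
        rcases hpZ.dvd_mul.mp h12 with h | h
        · have : (12 : ℤ) = 2 ^ 2 * 3 := by norm_num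
          rw [this] at h
          rcases hpZ.dvd_mul.mp h with h' | h'
          · exact absurd (hpZ.dvd_of_dvd_pow h') hl2
          · exact absurd h' hl3
        · exact hpZ.dvd_of_dvd_pow h
      exact hab ⟨ha, hb⟩
  · have hcop : IsCoprime ((ℓ : ℤ) ^ 4) (a ^ 2 + 12 * b ^ 2) :=
      (hpZ.coprime_iff_not_dvd.mpr hd).pow_left
    exact hcop.dvd_of_dvd_mul_left hA'
end

section
/- Let ℓ ∉ {2,3} be prime, C(a,b) = a⁴+36a²b²+432b⁴, and r_ℓ the number of roots of t⁴+36t²+432 in ℤ/ℓ. Then the number of pairs (a,b) ∈ (ℤ/ℓ⁴)² with C(a,b) ≡ 0 mod ℓ⁴ equals ℓ⁶ + r_ℓ·ℓ³(ℓ-1). Consequently the density of pairs with C(a,b) ≢ 0 mod ℓ⁴ is 1 - 1/ℓ² - r_ℓ(ℓ-1)/ℓ⁵. -/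
/-!
Write `C(a, b) = a⁴ + 36a²b² + 432b⁴` and `f(t) = t⁴ + 36t² + 432`, and let `𝔪 = (ℓ)` be the
maximal ideal of `ℤ/ℓ⁴`. If `b ∈ 𝔪`, then `C(a, b) = 0` forces `a⁴ ∈ 𝔪`, so `a ∈ 𝔪`; conversely
`C(𝔪, 𝔪) ⊆ 𝔪⁴ = 0`. These pairs contribute `|𝔪|² = ℓ⁶`. If `b` is a unit, `C(a, b) = b⁴ f(a/b)`,
so these pairs are the `(t u, u)` with `f(t) = 0` and `u` a unit. Every root of `f` mod `ℓ` is
simple: `f' = 4t(t² + 18)`, while `f(0) = 2⁴3³` and `f(t) = 2²3³` when `t² = -18`. As `ℤ/ℓ⁴` is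
Henselian (its maximal ideal is nilpotent), the roots of `f` in `ℤ/ℓ⁴` are the unique lifts of
the roots mod `ℓ`.
-/

open Polynomial Function

theorem isAdicComplete_of_pow_eq_bot {R : Type*} [CommRing R] {I : Ideal R} {k : ℕ}
    (hI : I ^ k = ⊥) : IsAdicComplete I R := by
  have hbot : ∀ {m}, k ≤ m → (I ^ m • ⊤ : Submodule R R) = ⊥ := fun hm => by
    rw [Ideal.smul_eq_mul, Ideal.mul_top, eq_bot_iff, ← hI]
    exact Ideal.pow_le_pow_right hm
  refine { haus' := fun x hx => ?_, prec' := fun f hf => ⟨f k, fun m => ?_⟩ }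
  · exact SModEq.bot.mp (hbot le_rfl ▸ hx k)
  · rcases le_total m k with hmk | hkm
    · exact hf hmk
    · exact (SModEq.bot.mp (hbot le_rfl ▸ hf hkm)) ▸ SModEq.rfl

section Henselian

variable {R K : Type*} [CommRing R] [Field K] {φ : R →+* K} [HenselianRing R (RingHom.ker φ)]

theorem isUnit_iff_map_ne_zero_of_henselian (hφ : Surjective φ) {x : R} :
    IsUnit x ↔ φ x ≠ 0 := by
  refine ⟨fun hx => (hx.map φ).ne_zero, fun hx => ?_⟩
  obtain ⟨y, hy⟩ := hφ (φ x)⁻¹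
  have hxy : x * y - 1 ∈ RingHom.ker φ := by simp [hy, hx]
  have := Ideal.mem_jacobson_bot.mp (HenselianRing.jac hxy) 1
  rw [mul_one, sub_add_cancel] at this
  exact isUnit_of_mul_isUnit_left this

theorem isLocalRing_of_henselian (hφ : Surjective φ) : IsLocalRing R :=
  have := hφ.nontrivial
  .of_isUnit_or_isUnit_of_isUnit_add fun a b hab => by
    simp only [isUnit_iff_map_ne_zero_of_henselian hφ, map_add] at hab ⊢
    by_contra! h
    exact hab (by rw [h.1, h.2, add_zero])

theorem card_roots_eq_card_roots_map_of_henselian (hφ : Surjective φ) {f : R[X]} (hf : f.Monic)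
    (hsimple : ∀ y, (f.map φ).IsRoot y → (f.map φ).derivative.eval y ≠ 0) :
    Nat.card {x : R // f.IsRoot x} = Nat.card {y : K // (f.map φ).IsRoot y} := by
  have hroot : ∀ x : R, f.IsRoot x → (f.map φ).IsRoot (φ x) := fun x hx => by
    simp [IsRoot, eval_map_apply, hx.eq_zero]
  have hderiv : ∀ x : R, (f.map φ).IsRoot (φ x) → IsUnit (f.derivative.eval x) := fun x hx => by
    rw [isUnit_iff_map_ne_zero_of_henselian hφ, ← eval_map_apply, ← derivative_map]
    exact hsimple _ hx
  have := isLocalRing_of_henselian hφ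
  refine Nat.card_congr (Equiv.ofBijective (fun x => ⟨φ x, hroot x x.2⟩) ⟨?_, ?_⟩)
  · rintro ⟨a, ha⟩ ⟨b, hb⟩ hab
    have hab : φ a = φ b := congrArg Subtype.val hab
    refine Subtype.ext (IsLocalRing.eq_of_eval_eq_zero_of_not_isUnit_sub ha hb ?_
      (hderiv a (hroot a ha)))
    rw [isUnit_iff_map_ne_zero_of_henselian hφ, map_sub, hab, sub_self, not_not]
  · rintro ⟨y, hy⟩
    obtain ⟨a₀, rfl⟩ := hφ y
    obtain ⟨a, ha, ha₀⟩ := HenselianRing.is_henselian (I := RingHom.ker φ) f hf a₀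
      (by simpa [IsRoot, eval_map_apply] using hy) ((hderiv a₀ hy).map _)
    exact ⟨⟨a, ha⟩, Subtype.ext (sub_eq_zero.mp (by simpa [← map_sub] using ha₀))⟩

end Henselian

namespace ZMod

theorem ker_castHom {m k : ℕ} (h : m ∣ k) :
    RingHom.ker (castHom h (ZMod m)) = Ideal.span {(m : ZMod k)} := by
  have hcomp : (castHom h (ZMod m)).comp (Int.castRingHom (ZMod k)) = Int.castRingHom (ZMod m) :=
    RingHom.ext_int _ _
  rw [← Ideal.map_comap_of_surjective (Int.castRingHom (ZMod k)) intCast_surjective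
      (RingHom.ker _), RingHom.comap_ker, hcomp, ker_intCastRingHom, Ideal.map_span,
    Set.image_singleton, map_natCast]

theorem ker_castHom_pow_eq_bot {m k : ℕ} (hk : k ≠ 0) :
    RingHom.ker (castHom (dvd_pow_self m hk) (ZMod m)) ^ k = ⊥ := by
  rw [ker_castHom, Ideal.span_singleton_pow, ← Nat.cast_pow, natCast_self,
    Ideal.span_singleton_eq_bot]

theorem card_ker_castHom_mul {m k : ℕ} (h : m ∣ k) :
    Nat.card (RingHom.ker (castHom h (ZMod m))) * m = k := by
  have := (castHom h (ZMod m)).toAddMonoidHom.ker.card_mul_index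
  rwa [AddSubgroup.index_ker, AddMonoidHom.range_eq_top.mpr (castHom_surjective h),
    AddSubgroup.card_top, Nat.card_zmod, Nat.card_zmod] at this

theorem natCast_ne_zero_of_prime {p q : ℕ} [Fact p.Prime] (hq : q.Prime) (hqp : q ≠ p) :
    (q : ZMod p) ≠ 0 := by
  rw [Ne, natCast_eq_zero_iff]
  exact fun h => hqp ((Nat.prime_dvd_prime_iff_eq Fact.out hq).mp h).symm

end ZMod

section Quartic

variable {R : Type*} [CommRing R]

def quarticForm (q : R × R) : R :=
  q.1 ^ 4 + 36 * q.1 ^ 2 * q.2 ^ 2 + 432 * q.2 ^ 4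

variable (R) in
noncomputable def quarticPoly : R[X] :=
  X ^ 4 + 36 * X ^ 2 + 432

theorem isRoot_quarticPoly {t : R} :
    (quarticPoly R).IsRoot t ↔ t ^ 4 + 36 * t ^ 2 + 432 = 0 := by
  simp [quarticPoly]

theorem quarticPoly_monic : (quarticPoly R).Monic := by
  unfold quarticPoly
  monicity!

theorem map_quarticPoly {S : Type*} [CommRing S] (φ : R →+* S) :
    (quarticPoly R).map φ = quarticPoly S := by
  simp [quarticPoly]

theorem eval_derivative_quarticPoly_ne_zero {K : Type*} [Field K] (h2 : (2 : K) ≠ 0)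
    (h3 : (3 : K) ≠ 0) {t : K} (ht : (quarticPoly K).IsRoot t) :
    (quarticPoly K).derivative.eval t ≠ 0 := by
  rw [isRoot_quarticPoly] at ht
  have hderiv : (quarticPoly K).derivative.eval t = 4 * t * (t ^ 2 + 18) := by
    simp [quarticPoly]
    ring
  rw [hderiv]
  have h6 : ∀ a b : ℕ, (2 : K) ^ a * 3 ^ b ≠ 0 := fun a b =>
    mul_ne_zero (pow_ne_zero _ h2) (pow_ne_zero _ h3)
  refine mul_ne_zero (mul_ne_zero ?_ fun h0 => h6 4 3 ?_) fun h18 => h6 2 3 ?_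
  · simpa [show (4 : K) = 2 * 2 by norm_num] using h2
  · linear_combination ht - t ^ 3 * h0 - 36 * t * h0
  · linear_combination ht - (t ^ 2 + 18) * h18

theorem quarticForm_mul_right (t u : R) :
    quarticForm (t * u, u) = u ^ 4 * (t ^ 4 + 36 * t ^ 2 + 432) := by
  unfold quarticForm
  ring

theorem quarticForm_mul_units_eq_zero_iff (t : R) (u : Rˣ) :
    quarticForm (t * u, (u : R)) = 0 ↔ (quarticPoly R).IsRoot t := by
  rw [quarticForm_mul_right, ← Units.val_pow_eq_pow_val, Units.mul_right_eq_zero,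
    isRoot_quarticPoly]

noncomputable def quarticFormUnitEquiv :
    {q : R × R // quarticForm q = 0 ∧ IsUnit q.2} ≃ {t : R // (quarticPoly R).IsRoot t} × Rˣ where
  toFun q := (⟨q.1.1 * ↑q.2.2.unit⁻¹, by
      rw [← quarticForm_mul_units_eq_zero_iff _ q.2.2.unit, Units.inv_mul_cancel_right,
        IsUnit.unit_spec]
      exact q.2.1⟩, q.2.2.unit)
  invFun x := ⟨(x.1 * x.2, x.2), (quarticForm_mul_units_eq_zero_iff _ _).mpr x.1.2, x.2.isUnit⟩
  left_inv q := by ext <;> simp [mul_assoc]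
  right_inv x := by ext <;> simp

theorem quarticForm_eq_zero_iff_of_mem {I : Ideal R} [I.IsPrime] (hI : I ^ 4 = ⊥) {q : R × R}
    (hb : q.2 ∈ I) : quarticForm q = 0 ↔ q.1 ∈ I := by
  constructor
  · intro hq
    refine Ideal.IsPrime.mem_of_pow_mem ‹_› 4 ?_
    have : q.1 ^ 4 = -(36 * q.1 ^ 2 * q.2 ^ 2 + 432 * q.2 ^ 4) := by
      unfold quarticForm at hq
      linear_combination hq
    rw [this, I.neg_mem_iff]
    exact I.add_mem (I.mul_mem_left _ (I.pow_mem_of_mem hb 2 two_pos))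
      (I.mul_mem_left _ (I.pow_mem_of_mem hb 4 four_pos))
  · intro ha
    rw [← Ideal.mem_bot, ← hI]
    have hmixed : q.1 ^ 2 * q.2 ^ 2 ∈ I ^ 4 := by
      rw [show 4 = 2 + 2 from rfl, pow_add]
      exact Ideal.mul_mem_mul (Ideal.pow_mem_pow ha 2) (Ideal.pow_mem_pow hb 2)
    unfold quarticForm
    rw [mul_assoc]
    exact add_mem (add_mem (Ideal.pow_mem_pow ha 4) (Ideal.mul_mem_left _ _ hmixed))
      (Ideal.mul_mem_left _ _ (Ideal.pow_mem_pow hb 4))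

end Quartic

theorem card_quarticForm_eq_zero {R K : Type*} [CommRing R] [Finite R] [Field K] {φ : R →+* K}
    (hφ : Surjective φ) (hker : RingHom.ker φ ^ 4 = ⊥) (h2 : (2 : K) ≠ 0) (h3 : (3 : K) ≠ 0) :
    Nat.card {q : R × R // quarticForm q = 0} =
      Nat.card (RingHom.ker φ) ^ 2 +
        Nat.card {t : K // (quarticPoly K).IsRoot t} * Nat.card Rˣ := by
  classical
  have : IsAdicComplete (RingHom.ker φ) R := isAdicComplete_of_pow_eq_bot hker
  set I := RingHom.ker φ
  have : I.IsPrime := RingHom.ker_isPrime φ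
  have hnonunit : {q : R × R // quarticForm q = 0 ∧ q.2 ∈ I} ≃ I × I :=
    (Equiv.subtypeEquivRight fun q =>
      ⟨fun h => ⟨(quarticForm_eq_zero_iff_of_mem hker h.2).mp h.1, h.2⟩,
        fun h => ⟨(quarticForm_eq_zero_iff_of_mem hker h.2).mpr h.1, h.2⟩⟩).trans
      Equiv.subtypeProdEquivProd
  have hunit : {q : R × R // quarticForm q = 0 ∧ q.2 ∉ I} ≃
      {t // (quarticPoly R).IsRoot t} × Rˣ :=
    (Equiv.subtypeEquivRight fun q => by
      rw [isUnit_iff_map_ne_zero_of_henselian hφ, RingHom.mem_ker]).trans quarticFormUnitEquiv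
  have hroots := card_roots_eq_card_roots_map_of_henselian hφ quarticPoly_monic
    (by rw [map_quarticPoly]; exact fun y => eval_derivative_quarticPoly_ne_zero h2 h3)
  rw [map_quarticPoly] at hroots
  calc Nat.card {q : R × R // quarticForm q = 0}
      = Nat.card {q : R × R // quarticForm q = 0 ∧ q.2 ∈ I} +
          Nat.card {q : R × R // quarticForm q = 0 ∧ q.2 ∉ I} := by
        rw [← Nat.card_sum, ← Nat.card_congr (Equiv.sumCompl fun q => q.1.2 ∈ I)]
        exact Nat.card_congr <| (Equiv.subtypeSubtypeEquivSubtypeInter (quarticForm · = 0)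
          (·.2 ∈ I)).sumCongr (Equiv.subtypeSubtypeEquivSubtypeInter (quarticForm · = 0) (·.2 ∉ I))
    _ = _ := by
        rw [Nat.card_congr hnonunit, Nat.card_congr hunit, Nat.card_prod, Nat.card_prod, sq,
          hroots]

theorem card_quarticForm_zmod_eq_zero (ℓ : ℕ) [Fact ℓ.Prime] (h2 : ℓ ≠ 2) (h3 : ℓ ≠ 3) :
    Nat.card {q : ZMod (ℓ ^ 4) × ZMod (ℓ ^ 4) // quarticForm q = 0} =
      ℓ ^ 6 + Nat.card {t : ZMod ℓ // t ^ 4 + 36 * t ^ 2 + 432 = 0} * ℓ ^ 3 * (ℓ - 1) := by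
  have hℓ : ℓ.Prime := Fact.out
  have hdvd : ℓ ∣ ℓ ^ 4 := dvd_pow_self ℓ four_ne_zero
  have hker : Nat.card (RingHom.ker (ZMod.castHom hdvd (ZMod ℓ))) = ℓ ^ 3 :=
    Nat.eq_of_mul_eq_mul_right hℓ.pos (by rw [ZMod.card_ker_castHom_mul hdvd]; ring)
  have hunits : Nat.card (ZMod (ℓ ^ 4))ˣ = ℓ ^ 3 * (ℓ - 1) := by
    rw [Nat.card_eq_fintype_card, ZMod.card_units_eq_totient, Nat.totient_prime_pow hℓ four_pos]
    rfl
  rw [card_quarticForm_eq_zero (ZMod.castHom_surjective hdvd)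
    (ZMod.ker_castHom_pow_eq_bot four_ne_zero)
    (by exact_mod_cast ZMod.natCast_ne_zero_of_prime Nat.prime_two h2.symm)
    (by exact_mod_cast ZMod.natCast_ne_zero_of_prime Nat.prime_three h3.symm), hker, hunits]
  simp only [isRoot_quarticPoly]
  ring

/-- Let `ℓ ∉ {2,3}` be prime, `C(a,b) = a⁴ + 36a²b² + 432b⁴`, and `r_ℓ` the number of
roots of `t⁴ + 36t² + 432` in `ℤ/ℓ`.  The number of pairs `(a,b) ∈ (ℤ/ℓ⁴)²` with
`C(a,b) ≡ 0 (mod ℓ⁴)` is `ℓ⁶ + r_ℓ·ℓ³(ℓ-1)`; consequently the density of pairs with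
`C(a,b) ≢ 0 (mod ℓ⁴)` is `1 - 1/ℓ² - r_ℓ(ℓ-1)/ℓ⁵`. -/
theorem stmt14 (ℓ : ℕ) [Fact ℓ.Prime] (h2 : ℓ ≠ 2) (h3 : ℓ ≠ 3) :
    Nat.card {p : ZMod (ℓ ^ 4) × ZMod (ℓ ^ 4) //
        p.1 ^ 4 + 36 * p.1 ^ 2 * p.2 ^ 2 + 432 * p.2 ^ 4 = 0} =
      ℓ ^ 6 + (Nat.card {t : ZMod ℓ // t ^ 4 + 36 * t ^ 2 + 432 = 0}) * ℓ ^ 3 * (ℓ - 1) ∧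
    (Nat.card {p : ZMod (ℓ ^ 4) × ZMod (ℓ ^ 4) //
        p.1 ^ 4 + 36 * p.1 ^ 2 * p.2 ^ 2 + 432 * p.2 ^ 4 ≠ 0} : ℝ) / (ℓ : ℝ) ^ 8 =
      1 - 1 / (ℓ : ℝ) ^ 2 -
        (Nat.card {t : ZMod ℓ // t ^ 4 + 36 * t ^ 2 + 432 = 0} : ℝ) *
          ((ℓ : ℝ) - 1) / (ℓ : ℝ) ^ 5 := by
  have hcount := card_quarticForm_zmod_eq_zero ℓ h2 h3
  refine ⟨hcount, ?_⟩
  have htotal := Nat.card_congr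
    (Equiv.sumCompl (quarticForm · = 0 : ZMod (ℓ ^ 4) × ZMod (ℓ ^ 4) → Prop))
  rw [Nat.card_sum, Nat.card_prod, Nat.card_zmod, ← pow_add, hcount] at htotal
  unfold quarticForm at htotal
  have hnonzero : (Nat.card {p : ZMod (ℓ ^ 4) × ZMod (ℓ ^ 4) //
      p.1 ^ 4 + 36 * p.1 ^ 2 * p.2 ^ 2 + 432 * p.2 ^ 4 ≠ 0} : ℝ) =
        (ℓ : ℝ) ^ 8 - (ℓ ^ 6 + Nat.card {t : ZMod ℓ // t ^ 4 + 36 * t ^ 2 + 432 = 0} *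
          ℓ ^ 3 * (ℓ - 1)) := by
    rw [eq_sub_iff_add_eq', ← Nat.cast_pred (Fact.out : ℓ.Prime).pos]
    exact_mod_cast htotal
  have hℓ : (ℓ : ℝ) ≠ 0 := by exact_mod_cast (Fact.out : ℓ.Prime).ne_zero
  rw [hnonzero]
  field_simp
  ring
end
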